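/- arXiv:1803.01603 — 5 statements merged into one kernel-verified Lean document; each statement's English description precedes it below -/
import Mathlib

section
/- A partition λ is an (s, s+1)-core partition with d-distinct parts if and only if β(λ) is a d-th order twin-free subset of {1, 2, ..., s−1}. -/
open Finset

/-- `lam` gives the parts of a partition with `l` parts, 1-indexed:
positive parts which are nonincreasing. -/
def IsPartition (lam : ℕ → ℕ) (l : ℕ) : Prop :=
  (∀ i, 1 ≤ i → i ≤ l → 0 < lam i) ∧ ∀ i, 1 ≤ i → i < l → lam (i + 1) ≤ lam i

/-- Hook length of the box `(i,j)` of the Young diagram: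
arm (boxes to the right) + leg (boxes below) + 1. -/
def hookLen (lam : ℕ → ℕ) (l i j : ℕ) : ℕ :=
  (lam i - j) + ((Finset.Ioc i l).filter fun r => j ≤ lam r).card + 1

/-- The β-set: the set of first-column hook lengths `λ_i + l - i`. -/
def betaSet (lam : ℕ → ℕ) (l : ℕ) : Finset ℕ :=
  (Finset.Icc 1 l).image fun i => lam i + l - i

/-- `λ` is an `s`-core: no box of the Young diagram has hook length `s`. -/
def IsCore (lam : ℕ → ℕ) (l s : ℕ) : Prop :=
  ∀ i ∈ Finset.Icc 1 l, ∀ j ∈ Finset.Icc 1 (lam i), hookLen lam l i j ≠ s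

/-- `λ` has `d`-distinct parts: consecutive parts differ by at least `d`. -/
def DDistinct (lam : ℕ → ℕ) (l d : ℕ) : Prop :=
  ∀ i, 1 ≤ i → i < l → lam (i + 1) + d ≤ lam i

/-- `X` is a `d`-th order twin-free set. -/
def TwinFree (d : ℕ) (X : Finset ℕ) : Prop :=
  ∀ x ∈ X, ∀ k, 1 ≤ k → k ≤ d → x + k ∉ X

open Classical in
/-- Number of `d`-th order twin-free subsets of `{1, 2, ..., s-1}`. -/
noncomputable def numTwinFree (d s : ℕ) : ℕ :=
  ((Finset.Icc 1 (s - 1)).powerset.filter fun X => TwinFree d X).card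


lemma lam_anti {lam : ℕ → ℕ} {l : ℕ} (h : IsPartition lam l) {i j : ℕ}
    (h1 : 1 ≤ i) (hij : i ≤ j) (hjl : j ≤ l) : lam j ≤ lam i := by
  induction j, hij using Nat.le_induction with
  | base => exact le_refl _
  | succ j hj ih => exact le_trans (h.2 j (h1.trans hj) (by omega)) (ih (by omega))

lemma mem_betaSet {lam : ℕ → ℕ} {l b : ℕ} :
    b ∈ betaSet lam l ↔ ∃ i, (1 ≤ i ∧ i ≤ l) ∧ lam i + l - i = b := by
  simp [betaSet, mem_Icc]

lemma betaSet_pos {lam : ℕ → ℕ} {l : ℕ} (h : IsPartition lam l) {b : ℕ}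
    (hb : b ∈ betaSet lam l) : 1 ≤ b := by
  obtain ⟨i, ⟨h1, h2⟩, he⟩ := mem_betaSet.1 hb
  have := h.1 i h1 h2
  omega

lemma hook_le {lam : ℕ → ℕ} {l i j : ℕ} (hil : i ≤ l) (hj : 1 ≤ j) (hj2 : j ≤ lam i) :
    hookLen lam l i j ≤ lam i + l - i := by
  unfold hookLen
  have h1 : ((Ioc i l).filter fun r => j ≤ lam r).card ≤ (Ioc i l).card :=
    card_filter_le _ _
  rw [Nat.card_Ioc] at h1
  omega

lemma row1_hook {lam : ℕ → ℕ} {l : ℕ} (h : IsPartition lam l) (hl : 1 ≤ l) {x : ℕ}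
    (hx : x < lam 1 + l - 1) (hxb : x ∉ betaSet lam l) :
    ∃ j, 1 ≤ j ∧ j ≤ lam 1 ∧ hookLen lam l 1 j = lam 1 + l - 1 - x := by
  classical
  set S : Finset ℕ := (Icc 1 l).filter (fun r => lam r + l - r < x) with hS
  set m := S.card with hm
  have hml : m ≤ l := by
    have h1 : S.card ≤ (Icc 1 l).card := by
      rw [hS]; exact card_filter_le _ _
    rw [Nat.card_Icc] at h1
    omega
  have hup : ∀ r ∈ S, ∀ r', r < r' → r' ≤ l → r' ∈ S := by
    intro r hr r' hrr' hr'l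
    simp only [hS, mem_filter, mem_Icc] at hr ⊢
    refine ⟨⟨by omega, hr'l⟩, ?_⟩
    have := lam_anti h hr.1.1 (le_of_lt hrr') hr'l
    omega
  have hA : ∀ r, 1 ≤ r → r ≤ l → ((lam r + l - r < x) ↔ l - m < r) := by
    intro r h1 h2
    constructor
    · intro hrx
      have hrS : r ∈ S := by
        simp only [hS, mem_filter, mem_Icc]
        exact ⟨⟨h1, h2⟩, hrx⟩
      have hsub : Icc r l ⊆ S := by
        intro r' hr'
        simp only [mem_Icc] at hr'
        rcases eq_or_lt_of_le hr'.1 with he | hlt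
        · rwa [← he]
        · exact hup r hrS r' hlt hr'.2
      have := card_le_card hsub
      rw [Nat.card_Icc] at this
      omega
    · intro hlm
      by_contra hrx
      have hsub : S ⊆ Ioc r l := by
        intro r' hr'
        have hr'' := hr'
        simp only [hS, mem_filter, mem_Icc] at hr''
        simp only [mem_Ioc]
        refine ⟨?_, hr''.1.2⟩
        by_contra hle
        push_neg at hle
        rcases eq_or_lt_of_le hle with he | hlt
        · rw [he] at hr''
          exact hrx hr''.2
        · have hrS := hup r' hr' r hlt h2
          simp only [hS, mem_filter, mem_Icc] at hrS
          exact hrx hrS.2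
      have := card_le_card hsub
      rw [Nat.card_Ioc] at this
      omega
  have hmx : m ≤ x := by
    have hinj : m = (S.image (fun r => lam r + l - r)).card := by
      rw [card_image_of_injOn]
      intro a ha b hb hab
      simp only [hS, mem_coe, mem_filter, mem_Icc] at ha hb
      by_contra hne
      rcases Nat.lt_or_ge a b with hlt | hge
      · have := lam_anti h ha.1.1 (le_of_lt hlt) hb.1.2
        simp only at hab
        omega
      · have hlt : b < a := by omega
        have := lam_anti h hb.1.1 (le_of_lt hlt) ha.1.2
        simp only at hab
        omega
    have hsub : S.image (fun r => lam r + l - r) ⊆ range x := by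
      intro y hy
      simp only [mem_image] at hy
      obtain ⟨r, hr, he⟩ := hy
      simp only [hS, mem_filter, mem_Icc] at hr
      simp only [mem_range]
      omega
    have := card_le_card hsub
    rw [card_range] at this
    omega
  have hm1 : m < l := by
    have h1 : ¬ (l - m < 1) := by
      rw [← hA 1 (le_refl 1) hl]
      omega
    omega
  set j := x + 1 - m with hj
  have hr0 : x + 1 ≤ lam (l - m) + m := by
    have hmem : ¬ (lam (l-m) + l - (l-m) < x) := by
      rw [hA (l-m) (by omega) (by omega)]
      omega
    have hne : lam (l-m) + l - (l-m) ≠ x := by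
      intro he
      exact hxb (mem_betaSet.2 ⟨l-m, ⟨by omega, by omega⟩, he⟩)
    omega
  have hjlam : j ≤ lam 1 := by
    have := lam_anti h (le_refl 1) (by omega : 1 ≤ l - m) (by omega)
    omega
  have hfilter : (Ioc 1 l).filter (fun r => j ≤ lam r) = Ioc 1 (l - m) := by
    ext r
    simp only [mem_filter, mem_Ioc]
    constructor
    · rintro ⟨⟨h1r, hrl⟩, hjr⟩
      refine ⟨h1r, ?_⟩
      by_contra hgt
      push_neg at hgt
      have hm1' : 1 ≤ m := by omega
      have hr1x : lam (l - m + 1) + l - (l - m + 1) < x := by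
        rw [hA (l-m+1) (by omega) (by omega)]
        omega
      have hmono : lam r ≤ lam (l - m + 1) := lam_anti h (by omega) (by omega) (by omega)
      omega
    · rintro ⟨h1r, hrlm⟩
      refine ⟨⟨h1r, by omega⟩, ?_⟩
      have hmono : lam (l - m) ≤ lam r := lam_anti h (by omega) hrlm (by omega)
      omega
  refine ⟨j, by omega, hjlam, ?_⟩
  unfold hookLen
  rw [hfilter, Nat.card_Ioc]
  omega

lemma twinfree_of_ddistinct {lam : ℕ → ℕ} {l d : ℕ} (h : IsPartition lam l)
    (hdd : DDistinct lam l d) : TwinFree d (betaSet lam l) := by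
  intro b hb k hk1 hkd hbk
  obtain ⟨i, ⟨hi1, hil⟩, hbi⟩ := mem_betaSet.1 hb
  obtain ⟨i', ⟨hi'1, hi'l⟩, hbi'⟩ := mem_betaSet.1 hbk
  have hlt : i' < i := by
    by_contra hge
    push_neg at hge
    have := lam_anti h hi1 hge hi'l
    omega
  have hdi := hdd (i - 1) (by omega) (by omega)
  have heq : i - 1 + 1 = i := by omega
  rw [heq] at hdi
  have hmono := lam_anti h hi'1 (by omega : i' ≤ i - 1) (by omega)
  omega

/-- `λ` is an `(s,s+1)`-core partition with `d`-distinct parts iff `β(λ)` is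
a `d`-th order twin-free subset of `{1, 2, ..., s-1}`. -/
theorem stmt5 (lam : ℕ → ℕ) (l s d : ℕ) (hs : 0 < s) (hd : 0 < d)
    (h : IsPartition lam l) :
    (IsCore lam l s ∧ IsCore lam l (s + 1) ∧ DDistinct lam l d) ↔
      (TwinFree d (betaSet lam l) ∧ betaSet lam l ⊆ Finset.Icc 1 (s - 1)) := by
  rcases Nat.eq_zero_or_pos l with hl0 | hl
  · subst hl0
    have hb : betaSet lam 0 = ∅ := by simp [betaSet]
    constructor
    · intro _
      constructor
      · intro b hb'
        rw [hb] at hb'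
        simp at hb'
      · rw [hb]
        exact empty_subset _
    · intro _
      refine ⟨fun i hi => by simp at hi, fun i hi => by simp at hi, fun i h1 h2 => by omega⟩
  · constructor
    · rintro ⟨hc1, hc2, hdd⟩
      have htf := twinfree_of_ddistinct h hdd
      refine ⟨htf, ?_⟩
      have hB : lam 1 + l - 1 ≤ s - 1 := by
        by_contra hcon
        push_neg at hcon
        have hBs : s ≤ lam 1 + l - 1 := by omega
        by_cases hx1 : (lam 1 + l - 1 - s) ∈ betaSet lam l
        · have hge : s + 1 ≤ lam 1 + l - 1 := by
            have := betaSet_pos h hx1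
            omega
          by_cases hx2 : (lam 1 + l - 1 - (s + 1)) ∈ betaSet lam l
          · have htw := htf _ hx2 1 le_rfl hd
            have he : lam 1 + l - 1 - (s + 1) + 1 = lam 1 + l - 1 - s := by omega
            rw [he] at htw
            exact htw hx1
          · obtain ⟨j, hj1, hj2, hj3⟩ := row1_hook h hl (x := lam 1 + l - 1 - (s + 1))
              (by omega) hx2
            have he : lam 1 + l - 1 - (lam 1 + l - 1 - (s + 1)) = s + 1 := by omega
            exact hc2 1 (by simp [mem_Icc]; omega) j (by simp [mem_Icc]; omega)
              (by rw [hj3, he])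
        · obtain ⟨j, hj1, hj2, hj3⟩ := row1_hook h hl (x := lam 1 + l - 1 - s)
            (by omega) hx1
          have he : lam 1 + l - 1 - (lam 1 + l - 1 - s) = s := by omega
          exact hc1 1 (by simp [mem_Icc]; omega) j (by simp [mem_Icc]; omega)
            (by rw [hj3, he])
      intro b hbm
      obtain ⟨i, ⟨hi1, hil⟩, he⟩ := mem_betaSet.1 hbm
      have hmono := lam_anti h (le_refl 1) hi1 hil
      have hpos := h.1 i hi1 hil
      simp only [mem_Icc]
      omega
    · rintro ⟨htf, hsub⟩
      have hbnd : ∀ i, 1 ≤ i → i ≤ l → lam i + l - i ≤ s - 1 := by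
        intro i h1 h2
        have hmem : lam i + l - i ∈ betaSet lam l := mem_betaSet.2 ⟨i, ⟨h1, h2⟩, rfl⟩
        have := hsub hmem
        simp only [mem_Icc] at this
        exact this.2
      refine ⟨?_, ?_, ?_⟩
      · intro i hi j hj
        simp only [mem_Icc] at hi hj
        have hle := hook_le (lam := lam) hi.2 hj.1 hj.2
        have := hbnd i hi.1 hi.2
        omega
      · intro i hi j hj
        simp only [mem_Icc] at hi hj
        have hle := hook_le (lam := lam) hi.2 hj.1 hj.2
        have := hbnd i hi.1 hi.2
        omega
      · intro i h1 h2
        by_contra hcon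
        push_neg at hcon
        have hb1 : lam (i + 1) + l - (i + 1) ∈ betaSet lam l :=
          mem_betaSet.2 ⟨i + 1, ⟨by omega, by omega⟩, rfl⟩
        have hmono := h.2 i h1 h2
        have hk := htf _ hb1 (lam i - lam (i + 1) + 1) (by omega) (by omega)
        apply hk
        exact mem_betaSet.2 ⟨i, ⟨h1, by omega⟩, by omega⟩
end

section
/- Let N_d(s) be the number of d-th order twin-free subsets of {1, ..., s−1}. Then N_d satisfies N_d(s) = s for 1 ≤ s ≤ d+1 and N_d(s) = N_d(s−1) + N_d(s−(d+1)) for s ≥ d+2. In particular, for d = 1, N_1(s) equals the Fibonacci number F_{s+1}. -/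
open Finset

open Classical

lemma twinfree_subset {d : ℕ} {X Y : Finset ℕ} (h : TwinFree d Y) (hs : X ⊆ Y) :
    TwinFree d X := fun x hx k h1 h2 hk => h x (hs hx) k h1 h2 (hs hk)

lemma g_zero (d : ℕ) : numTwinFree d 1 = 1 := by
  unfold numTwinFree
  have he : Finset.Icc 1 (1-1) = ∅ := by simp
  rw [he, Finset.powerset_empty, Finset.filter_singleton,
    if_pos (show TwinFree d ∅ from fun x hx => absurd hx (Finset.notMem_empty x)),
    Finset.card_singleton]

lemma g_rec (d : ℕ) (hd : 0 < d) (n : ℕ) (hn : 1 ≤ n) :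
    numTwinFree d (n+1) = numTwinFree d n + numTwinFree d (n - d) := by
  classical
  unfold numTwinFree
  have key := Finset.card_filter_add_card_filter_not
    (s := (Finset.Icc 1 ((n+1)-1)).powerset.filter fun X => TwinFree d X)
    (p := fun X => n ∈ X)
  rw [← key]
  have h1 : (((Finset.Icc 1 ((n+1)-1)).powerset.filter fun X => TwinFree d X).filter
      fun X => ¬ n ∈ X) = (Finset.Icc 1 (n-1)).powerset.filter fun X => TwinFree d X := by
    ext X
    simp only [Finset.mem_filter, Finset.mem_powerset, Nat.add_sub_cancel]
    constructor
    · rintro ⟨⟨hsub, htf⟩, hnot⟩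
      refine ⟨fun x hx => ?_, htf⟩
      have := hsub hx
      simp only [Finset.mem_Icc] at this ⊢
      refine ⟨this.1, ?_⟩
      have hne : x ≠ n := fun h => hnot (h ▸ hx)
      omega
    · rintro ⟨hsub, htf⟩
      refine ⟨⟨fun x hx => ?_, htf⟩, fun hmem => ?_⟩
      · have := hsub hx; simp only [Finset.mem_Icc] at this ⊢; omega
      · have := hsub hmem; simp only [Finset.mem_Icc] at this; omega
  have h2 : (((Finset.Icc 1 ((n+1)-1)).powerset.filter fun X => TwinFree d X).filter
      fun X => n ∈ X).card = ((Finset.Icc 1 (n - d - 1)).powerset.filter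
      fun X => TwinFree d X).card := by
    refine Finset.card_bij' (fun X _ => X.erase n) (fun Y _ => insert n Y) ?hi ?hj ?li ?ri
    case hi =>
      intro X hX
      simp only [Finset.mem_filter, Finset.mem_powerset, Nat.add_sub_cancel] at hX ⊢
      obtain ⟨⟨hsub, htf⟩, hmem⟩ := hX
      refine ⟨fun x hx => ?_, twinfree_subset htf (Finset.erase_subset _ _)⟩
      rw [Finset.mem_erase] at hx
      obtain ⟨hne, hxX⟩ := hx
      have hb := hsub hxX
      simp only [Finset.mem_Icc] at hb ⊢
      refine ⟨hb.1, ?_⟩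
      by_contra hgt
      push_neg at hgt
      -- x > n - d - 1, x ≤ n, x ≠ n, so n - x ∈ [1, d]
      have h1k : 1 ≤ n - x := by omega
      have h2k : n - x ≤ d := by omega
      exact htf x hxX (n - x) h1k h2k (by rwa [Nat.add_sub_cancel' (by omega)])
    case hj =>
      intro Y hY
      simp only [Finset.mem_filter, Finset.mem_powerset, Nat.add_sub_cancel] at hY ⊢
      obtain ⟨hsub, htf⟩ := hY
      have hnY : n ∉ Y := fun h => by
        have := hsub h; simp only [Finset.mem_Icc] at this; omega
      refine ⟨⟨?_, ?_⟩, Finset.mem_insert_self _ _⟩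
      · intro x hx
        rcases Finset.mem_insert.mp hx with rfl | hx
        · simp only [Finset.mem_Icc]; omega
        · have := hsub hx; simp only [Finset.mem_Icc] at this ⊢; omega
      · intro x hx k hk1 hk2 hmem
        rcases Finset.mem_insert.mp hx with rfl | hx
        · rcases Finset.mem_insert.mp hmem with h | h
          · omega
          · have := hsub h; simp only [Finset.mem_Icc] at this; omega
        · rcases Finset.mem_insert.mp hmem with h | h
          · have := hsub hx; simp only [Finset.mem_Icc] at this; omega
          · exact htf x hx k hk1 hk2 h
    case li =>
      intro X hX
      simp only [Finset.mem_filter] at hX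
      exact Finset.insert_erase hX.2
    case ri =>
      intro Y hY
      simp only [Finset.mem_filter, Finset.mem_powerset] at hY
      have hnY : n ∉ Y := fun h => by
        have := hY.1 h; simp only [Finset.mem_Icc] at this; omega
      exact Finset.erase_insert hnY
  rw [h1, h2, Nat.add_comm]

lemma g_small (d : ℕ) (hd : 0 < d) : ∀ n, n ≤ d → numTwinFree d (n+1) = n + 1 := by
  intro n
  induction n with
  | zero => intro _; exact g_zero d
  | succ m ih =>
    intro hle
    rw [g_rec d hd (m+1) (by omega)]
    have : m + 1 - d = 0 := by omega
    rw [this, ih (by omega)]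
    show m + 1 + numTwinFree d (0+1) = m + 1 + 1
    rw [g_zero]

lemma g_fib : ∀ n, numTwinFree 1 (n+1) = Nat.fib (n+2) := by
  intro n
  induction n using Nat.strong_induction_on with
  | _ n ih =>
    match n with
    | 0 => rw [g_zero]; rfl
    | 1 => rw [g_small 1 one_pos 1 le_rfl]; rfl
    | (m+2) =>
      have h := g_rec 1 one_pos (m+2) (by omega)
      have e1 : m + 2 - 1 = m + 1 := by omega
      rw [e1] at h
      rw [h, show m + 2 = (m+1)+1 from rfl, ih (m+1) (by omega), ih m (by omega)]
      rw [show Nat.fib (m+2+2) = Nat.fib (m+2) + Nat.fib (m+1+2) from Nat.fib_add_two]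
      omega


/-- `N_d(s) = s` for `1 ≤ s ≤ d+1`, `N_d(s) = N_d(s-1) + N_d(s-(d+1))` for
`s ≥ d+2`, and for `d = 1`, `N_1(s) = F_{s+1}`. -/
theorem stmt8 (d : ℕ) (hd : 0 < d) :
    (∀ s, 1 ≤ s → s ≤ d + 1 → numTwinFree d s = s) ∧
    (∀ s, d + 2 ≤ s →
      numTwinFree d s = numTwinFree d (s - 1) + numTwinFree d (s - (d + 1))) ∧
    (∀ s, 1 ≤ s → numTwinFree 1 s = Nat.fib (s + 1)) := by
  refine ⟨?_, ?_, ?_⟩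
  · intro s h1 h2
    obtain ⟨m, rfl⟩ : ∃ m, s = m + 1 := ⟨s - 1, by omega⟩
    exact g_small d hd m (by omega)
  · intro s hs
    obtain ⟨n, rfl⟩ : ∃ n, s = n + 1 := ⟨s - 1, by omega⟩
    have h := g_rec d hd n (by omega)
    rw [h, Nat.add_sub_cancel]
    congr 1
    congr 1
    omega
  · intro s h1
    obtain ⟨m, rfl⟩ : ∃ m, s = m + 1 := ⟨s - 1, by omega⟩
    rw [g_fib m]
end

section
/- The maximum over nonnegative integers k of f(k) = sk − k² − d·k(k−1)/2 equals: (d+2)n²/2 + dn/2 when s = (d+2)n, and (d+2)n²/2 + dn/2 + rn + (r−1) when s = (d+2)n + r with 1 ≤ r ≤ d+1. -/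
open Finset

lemma two_mul_choose_two (k : ℕ) : 2 * (Nat.choose k 2 : ℤ) = k * (k - 1) := by
  induction k with
  | zero => simp
  | succ n ih =>
    rw [Nat.choose_succ_succ, Nat.choose_one_right]
    push_cast at ih ⊢
    linear_combination ih

lemma two_mul_choose_succ (n : ℕ) : 2 * (Nat.choose (n + 1) 2 : ℤ) = (n + 1) * n := by
  have := two_mul_choose_two (n + 1)
  push_cast at this
  linarith

lemma hdiv_aux (d n : ℕ) :
    (((d : ℤ) + 2) * (n : ℤ) ^ 2 + (d : ℤ) * n) / 2
      = (d : ℤ) * (Nat.choose (n + 1) 2 : ℤ) + (n : ℤ) ^ 2 := by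
  have hc := two_mul_choose_succ n
  rw [show (((d : ℤ) + 2) * (n : ℤ) ^ 2 + (d : ℤ) * n)
      = 2 * ((d : ℤ) * (Nat.choose (n + 1) 2 : ℤ) + (n : ℤ) ^ 2) by linear_combination (-(d : ℤ)) * hc]
  exact Int.mul_ediv_cancel_left _ two_ne_zero

lemma prod_nonneg1 (m : ℤ) : 0 ≤ m * (m - 1) := by
  rcases le_or_gt m 0 with h | h
  · nlinarith
  · nlinarith

lemma prod_nonneg2 (m : ℤ) : 0 ≤ m * (m + 1) := by
  rcases lt_or_ge m 0 with h | h
  · nlinarith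
  · nlinarith

/-- The maximum over nonnegative integers `k` of `f(k) = s·k - k² - d·k(k-1)/2`
equals `((d+2)n² + dn)/2` when `s = (d+2)n`, and `((d+2)n² + dn)/2 + rn + (r-1)`
when `s = (d+2)n + r` with `1 ≤ r ≤ d+1`. -/
theorem stmt11 (d s : ℕ) (hd : 0 < d) (hs : 0 < s) :
    (∀ n : ℕ, s = (d + 2) * n →
      IsGreatest
        (Set.range fun k : ℕ => (s : ℤ) * k - (k : ℤ) ^ 2 - (d : ℤ) * (Nat.choose k 2 : ℤ))
        ((((d : ℤ) + 2) * (n : ℤ) ^ 2 + (d : ℤ) * n) / 2)) ∧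
    (∀ n r : ℕ, 1 ≤ r → r ≤ d + 1 → s = (d + 2) * n + r →
      IsGreatest
        (Set.range fun k : ℕ => (s : ℤ) * k - (k : ℤ) ^ 2 - (d : ℤ) * (Nat.choose k 2 : ℤ))
        ((((d : ℤ) + 2) * (n : ℤ) ^ 2 + (d : ℤ) * n) / 2 + (r : ℤ) * n + ((r : ℤ) - 1))) := by
  constructor
  · intro n hn
    subst hn
    have hc := two_mul_choose_succ n
    rw [hdiv_aux d n]
    constructor
    · refine ⟨n, ?_⟩
      have hck := two_mul_choose_two n
      push_cast
      refine mul_left_cancel₀ (two_ne_zero (α := ℤ)) ?_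
      linear_combination (-(d : ℤ)) * hck - (d : ℤ) * hc
    · rintro x ⟨k, rfl⟩
      have hck := two_mul_choose_two k
      set m : ℤ := (n : ℤ) - k with hm
      have key : 2 * ((d : ℤ) * (Nat.choose (n + 1) 2 : ℤ) + (n : ℤ) ^ 2)
          - 2 * ((((d : ℕ) + 2) * n : ℕ) * (k : ℤ) - (k : ℤ) ^ 2 - (d : ℤ) * (Nat.choose k 2 : ℤ))
          = ((d : ℤ) + 2) * m ^ 2 + (d : ℤ) * m := by
        push_cast
        linear_combination (d : ℤ) * hc + (d : ℤ) * hck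
      have hnn : 0 ≤ ((d : ℤ) + 2) * m ^ 2 + (d : ℤ) * m := by
        have h1 := mul_nonneg (show (0 : ℤ) ≤ (d : ℤ) + 2 by positivity) (prod_nonneg1 m)
        have h2 := mul_nonneg (show (0 : ℤ) ≤ (d : ℤ) + 2 by positivity) (prod_nonneg2 m)
        rcases le_or_gt 0 m with h | h
        · nlinarith
        · nlinarith
      simp only []
      linarith [key, hnn]
  · intro n r hr1 hr2 hn
    subst hn
    have hc := two_mul_choose_succ n
    rw [hdiv_aux d n]
    constructor
    · refine ⟨n + 1, ?_⟩
      push_cast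
      refine mul_left_cancel₀ (two_ne_zero (α := ℤ)) ?_
      linear_combination (-2 * (d : ℤ)) * hc
    · rintro x ⟨k, rfl⟩
      have hck := two_mul_choose_two k
      set m : ℤ := (n : ℤ) + 1 - k with hm
      have key : 2 * ((d : ℤ) * (Nat.choose (n + 1) 2 : ℤ) + (n : ℤ) ^ 2 + (r : ℤ) * n + ((r : ℤ) - 1))
          - 2 * ((((d : ℕ) + 2) * n + r : ℕ) * (k : ℤ) - (k : ℤ) ^ 2 - (d : ℤ) * (Nat.choose k 2 : ℤ))
          = ((d : ℤ) + 2) * m ^ 2 + (2 * (r : ℤ) - (d : ℤ) - 4) * m := by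
        push_cast
        linear_combination (d : ℤ) * hc + (d : ℤ) * hck
      have hnn : 0 ≤ ((d : ℤ) + 2) * m ^ 2 + (2 * (r : ℤ) - (d : ℤ) - 4) * m := by
        have h1 := mul_nonneg (show (0 : ℤ) ≤ (d : ℤ) + 2 by positivity) (prod_nonneg1 m)
        have h2 := mul_nonneg (show (0 : ℤ) ≤ (d : ℤ) + 2 by positivity) (prod_nonneg2 m)
        have hr1' : (1 : ℤ) ≤ (r : ℤ) := by exact_mod_cast hr1
        have hr2' : (r : ℤ) ≤ (d : ℤ) + 1 := by exact_mod_cast hr2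
        rcases le_or_gt 0 m with h | h
        · have h3 := mul_nonneg (show (0 : ℤ) ≤ 2 * (r : ℤ) - 2 by linarith) h
          nlinarith
        · have h3 := mul_nonneg (show (0 : ℤ) ≤ 2 * (d : ℤ) + 6 - 2 * r by linarith)
            (show (0 : ℤ) ≤ -m by linarith)
          nlinarith
      simp only []
      linarith [key, hnn]
end

section
/- For d = 1, the largest size of an (s,s+1)-core partition with distinct parts is ⌊(1/3)·C(s+1,2)⌋ = ⌊s(s+1)/6⌋. -/
open Finset

/-- The set of sizes of `(s,s+1)`-core partitions with `d`-distinct parts. -/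
def coreSizes (s d : ℕ) : Set ℕ :=
  {N | ∃ l lam, IsPartition lam l ∧ IsCore lam l s ∧ IsCore lam l (s + 1) ∧
    DDistinct lam l d ∧ N = ∑ i ∈ Finset.Icc 1 l, lam i}

/-!
In a partition with distinct parts, the hook lengths along a row decrease in steps of one or
two (a step of two occurs exactly below the end of a lower row), and the first row runs from
`λ₁ + l - 1` down to `1`. So if `λ₁ + l - 1 ≥ s + 1`, the first row contains a hook of length
`s` or `s + 1`. An `(s, s+1)`-core with distinct parts therefore has `λ₁ + l ≤ s`, hence
`λᵢ ≤ s + 1 - l - i`, and its size is at most that of the staircase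
`(s - l, s - l - 1, …, s + 1 - 2l)`, whose size is `(s(s+1) - (s - 3l)(s - 3l + 1)) / 6`.
Taking `l = ⌊(s+1)/3⌋` makes `(s - 3l)(s - 3l + 1) ∈ {0, 2}`, which attains `⌊s(s+1)/6⌋`.
-/

lemma exists_eq_or_eq_succ_of_le_add_two (f : ℕ → ℕ) {a b n : ℕ} (hab : a ≤ b)
    (hstep : ∀ j, a ≤ j → j < b → f j ≤ f (j + 1) + 2) (ha : n ≤ f a) (hb : f b ≤ n + 1) :
    ∃ j ∈ Icc a b, f j = n ∨ f j = n + 1 := by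
  induction hd : b - a generalizing a with
  | zero =>
    obtain rfl : a = b := by omega
    exact ⟨a, left_mem_Icc.2 le_rfl, by omega⟩
  | succ d ih =>
    by_cases hfa : f a ≤ n + 1
    · exact ⟨a, mem_Icc.2 ⟨le_rfl, hab⟩, by omega⟩
    have hnext := hstep a le_rfl (by omega)
    obtain ⟨j, hj, hfj⟩ := ih (a := a + 1) (by omega)
      (fun j h1 h2 => hstep j (by omega) h2) (by omega) (by omega)
    exact ⟨j, Icc_subset_Icc_left a.le_succ hj, hfj⟩

lemma DDistinct.add_mul_sub_le {lam : ℕ → ℕ} {l d : ℕ} (hd : DDistinct lam l d) {i r : ℕ}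
    (hi : 1 ≤ i) (hir : i ≤ r) (hrl : r ≤ l) : lam r + d * (r - i) ≤ lam i := by
  induction r, hir using Nat.le_induction with
  | base => simp
  | succ r hir ih =>
    have := hd r (by omega) (by omega)
    have := ih (by omega)
    rw [Nat.sub_add_comm hir, Nat.mul_succ]
    omega

lemma DDistinct.apply_lt_of_lt {lam : ℕ → ℕ} {l : ℕ} (hd : DDistinct lam l 1) {i r : ℕ}
    (hi : 1 ≤ i) (hir : i < r) (hrl : r ≤ l) : lam r < lam i := by
  have := hd.add_mul_sub_le hi hir.le hrl
  omega

lemma hookLen_one {lam : ℕ → ℕ} {l i : ℕ} (hp : IsPartition lam l) (hi : 1 ≤ i) (hil : i ≤ l) :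
    hookLen lam l i 1 = lam i + l - i := by
  have hall : (Ioc i l).filter (fun r => 1 ≤ lam r) = Ioc i l :=
    filter_true_of_mem fun r hr => hp.1 r (by have := (mem_Ioc.1 hr).1; omega) (mem_Ioc.1 hr).2
  have := hp.1 i hi hil
  rw [hookLen, hall, Nat.card_Ioc]
  omega

lemma hookLen_le {lam : ℕ → ℕ} {l i j : ℕ} (hil : i ≤ l) (hj : 1 ≤ j) (hji : j ≤ lam i) :
    hookLen lam l i j ≤ lam i + l - i := by
  have := (card_filter_le (Ioc i l) fun r => j ≤ lam r).trans_eq (Nat.card_Ioc i l)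
  unfold hookLen
  omega

lemma hookLen_row_end {lam : ℕ → ℕ} {l i : ℕ} (hd : DDistinct lam l 1) (hi : 1 ≤ i) :
    hookLen lam l i (lam i) = 1 := by
  have hnone : (Ioc i l).filter (fun r => lam i ≤ lam r) = ∅ :=
    filter_eq_empty_iff.2 fun r hr => by
      have := hd.apply_lt_of_lt hi (mem_Ioc.1 hr).1 (mem_Ioc.1 hr).2
      omega
  simp [hookLen, hnone]

/-- The step from `(i, j)` to `(i, j + 1)` is one plus the number of lower rows ending in
column `j`, and distinct parts allow at most one such row. -/
lemma hookLen_le_hookLen_succ_add_two {lam : ℕ → ℕ} {l i j : ℕ} (hd : DDistinct lam l 1)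
    (hj : j < lam i) : hookLen lam l i j ≤ hookLen lam l i (j + 1) + 2 := by
  have hsplit : (Ioc i l).filter (fun r => j ≤ lam r) ⊆
      (Ioc i l).filter (fun r => j + 1 ≤ lam r) ∪ (Ioc i l).filter (fun r => lam r = j) := by
    intro r
    simp only [mem_filter, mem_union]
    rintro ⟨hr, hjr⟩
    rcases hjr.lt_or_eq with h | h
    exacts [Or.inl ⟨hr, h⟩, Or.inr ⟨hr, h.symm⟩]
  have hone : ((Ioc i l).filter fun r => lam r = j).card ≤ 1 := by
    refine card_le_one.2 fun r hr r' hr' => ?_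
    simp only [mem_filter, mem_Ioc] at hr hr'
    by_contra hne
    rcases Nat.lt_or_gt_of_ne hne with h | h
    · have := hd.apply_lt_of_lt (by omega) h hr'.1.2
      omega
    · have := hd.apply_lt_of_lt (by omega) h hr.1.2
      omega
  have := (card_le_card hsplit).trans (card_union_le _ _)
  unfold hookLen
  omega

lemma add_le_of_isCore_of_isCore_succ {lam : ℕ → ℕ} {l s : ℕ} (hp : IsPartition lam l)
    (hs : IsCore lam l s) (hs' : IsCore lam l (s + 1)) (hd : DDistinct lam l 1) (hl : 1 ≤ l) :
    lam 1 + l ≤ s := by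
  have hrow := mem_Icc.2 ⟨le_rfl, hl⟩
  have hpos := hp.1 1 le_rfl hl
  by_contra! hbig
  obtain ⟨j, hj, hhook | hhook⟩ :=
    exists_eq_or_eq_succ_of_le_add_two (n := s) (fun j => hookLen lam l 1 j) hpos
      (fun j _ hj => hookLen_le_hookLen_succ_add_two hd hj)
      (by rw [hookLen_one hp le_rfl hl]; omega) (by rw [hookLen_row_end hd le_rfl]; omega)
  · exact hs 1 hrow j hj hhook
  · exact hs' 1 hrow j hj hhook

lemma two_mul_sum_sub_add (M l : ℕ) (h : l ≤ M) :
    2 * ∑ i ∈ Icc 1 l, (M - i) + l * (l + 1) = 2 * (l * M) := by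
  induction l with
  | zero => simp
  | succ l ih =>
    rw [sum_Icc_succ_top (by omega)]
    have := ih (by omega)
    have : (l + 1) * (l + 1 + 1) = l * (l + 1) + 2 * (l + 1) := by ring
    have : (l + 1) * M = l * M + M := by ring
    omega

lemma six_mul_sum_staircase (s l : ℕ) (h : 2 * l ≤ s + 1) :
    6 * ((∑ i ∈ Icc 1 l, (s + 1 - l - i) : ℕ) : ℤ) + ((s : ℤ) - 3 * l) * ((s : ℤ) - 3 * l + 1)
      = s * (s + 1) := by
  have := two_mul_sum_sub_add (s + 1 - l) l (by omega)
  generalize ∑ i ∈ Icc 1 l, (s + 1 - l - i) = S at this ⊢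
  zify [show l ≤ s + 1 by omega] at this
  linear_combination 3 * this

lemma sum_staircase_le (s l : ℕ) (h : 2 * l ≤ s + 1) :
    ∑ i ∈ Icc 1 l, (s + 1 - l - i) ≤ s * (s + 1) / 6 := by
  have hid := six_mul_sum_staircase s l h
  have : 0 ≤ ((s : ℤ) - 3 * l) * ((s : ℤ) - 3 * l + 1) := by
    rcases le_or_gt 0 ((s : ℤ) - 3 * l) with hu | hu <;> nlinarith
  rw [Nat.le_div_iff_mul_le (by norm_num)]
  generalize ∑ i ∈ Icc 1 l, (s + 1 - l - i) = S at hid ⊢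
  zify
  linarith

lemma sum_staircase_eq (s : ℕ) :
    ∑ i ∈ Icc 1 ((s + 1) / 3), (s + 1 - (s + 1) / 3 - i) = s * (s + 1) / 6 := by
  set k := (s + 1) / 3
  have hid := six_mul_sum_staircase s k (by omega)
  have hu : (s : ℤ) - 3 * k = 0 ∨ (s : ℤ) - 3 * k = -1 ∨ (s : ℤ) - 3 * k = 1 := by omega
  generalize ∑ i ∈ Icc 1 k, (s + 1 - k - i) = S at hid ⊢
  refine (Nat.div_eq_of_lt_le ?_ ?_).symm <;> zify <;>
    rcases hu with hu | hu | hu <;> rw [hu] at hid <;> linarith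

lemma isCore_of_forall_lt {lam : ℕ → ℕ} {l t : ℕ} (h : ∀ i ∈ Icc 1 l, lam i + l - i < t) :
    IsCore lam l t := fun i hi j hj => by
  have := hookLen_le (mem_Icc.1 hi).2 (mem_Icc.1 hj).1 (mem_Icc.1 hj).2
  have := h i hi
  omega

lemma sum_staircase_mem_coreSizes {s l : ℕ} (h : 2 * l ≤ s) :
    ∑ i ∈ Icc 1 l, (s + 1 - l - i) ∈ coreSizes s 1 := by
  have hβ : ∀ i ∈ Icc 1 l, (s + 1 - l - i) + l - i < s := fun i hi => by
    simp only [mem_Icc] at hi; omega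
  refine ⟨l, fun i => s + 1 - l - i, ⟨fun i _ _ => by beta_reduce; omega,
    fun i _ _ => by beta_reduce; omega⟩, isCore_of_forall_lt hβ,
    isCore_of_forall_lt fun i hi => (hβ i hi).trans (by omega),
    fun i _ _ => by beta_reduce; omega, rfl⟩

lemma le_of_mem_coreSizes {s N : ℕ} (hN : N ∈ coreSizes s 1) : N ≤ s * (s + 1) / 6 := by
  obtain ⟨l, lam, hp, hs, hs', hd, rfl⟩ := hN
  rcases Nat.eq_zero_or_pos l with rfl | hl
  · simp
  have hfirst := add_le_of_isCore_of_isCore_succ hp hs hs' hd hl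
  have hpart : ∀ i ∈ Icc 1 l, lam i ≤ s + 1 - l - i := fun i hi => by
    have := hd.add_mul_sub_le le_rfl (mem_Icc.1 hi).1 (mem_Icc.1 hi).2
    omega
  have hlast := hp.1 l hl le_rfl
  have := hpart l (mem_Icc.2 ⟨hl, le_rfl⟩)
  exact (sum_le_sum hpart).trans (sum_staircase_le s l (by omega))

theorem stmt13_general (s : ℕ) :
    IsGreatest (coreSizes s 1) (s * (s + 1) / 6) :=
  ⟨sum_staircase_eq s ▸ sum_staircase_mem_coreSizes (by omega), fun _ => le_of_mem_coreSizes⟩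

/-- For `d = 1`, the largest size of an `(s,s+1)`-core partition with distinct
parts is `⌊s(s+1)/6⌋`. -/
theorem stmt13 (s : ℕ) (hs : 0 < s) :
    IsGreatest (coreSizes s 1) (s * (s + 1) / 6) :=
  stmt13_general s
end

section
/- For every positive integer d, the number of (d+1, d+2)-core partitions with d-distinct parts is d + 1, and these are exactly the empty partition and the single-part partitions (m) for 1 ≤ m ≤ d. -/
open Finset

/-- The parts function (1-indexed) of a partition given as a list of parts. -/
def partOf (L : List ℕ) : ℕ → ℕ := fun i => L.getD (i - 1) 0

-- last row bound
lemma lastRow (d : ℕ) (lam : ℕ → ℕ) (l : ℕ) (hl : 1 ≤ l)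
    (hp : IsPartition lam l) (hc : IsCore lam l (d + 1)) : lam l ≤ d := by
  by_contra h
  push_neg at h
  have hpos : 0 < lam l := hp.1 l hl le_rfl
  have := hc l (by simp [Finset.mem_Icc]; omega) (lam l - d)
    (by simp [Finset.mem_Icc]; omega)
  apply this
  simp [hookLen, Finset.Ioc_self]
  omega

lemma noTwo (d : ℕ) (lam : ℕ → ℕ) (k : ℕ)
    (hp : IsPartition lam (k + 2)) (hc1 : IsCore lam (k + 2) (d + 1))
    (hc2 : IsCore lam (k + 2) (d + 2)) (hdd : DDistinct lam (k + 2) d) : False := by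
  have hb1 : 0 < lam (k + 2) := hp.1 (k + 2) (by omega) le_rfl
  have hbd : lam (k + 2) ≤ d := lastRow d lam (k + 2) (by omega) hp hc1
  have hab : lam (k + 2) + d ≤ lam (k + 1) := hdd (k + 1) (by omega) (by omega)
  have hook : ∀ j, hookLen lam (k + 2) (k + 1) j
      = (lam (k + 1) - j) + (if j ≤ lam (k + 2) then 1 else 0) + 1 := by
    intro j
    have h1 : Finset.Ioc (k + 1) (k + 2) = {k + 2} := Nat.Ioc_succ_singleton (k+1)
    simp [hookLen, h1, Finset.filter_singleton]
    split <;> simp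
  by_cases hcase : lam (k + 1) = lam (k + 2) + d
  · apply hc2 (k + 1) (by simp [Finset.mem_Icc]) (lam (k + 2))
      (by simp [Finset.mem_Icc]; omega)
    rw [hook, if_pos le_rfl]
    omega
  · apply hc1 (k + 1) (by simp [Finset.mem_Icc]) (lam (k + 1) - d)
      (by simp [Finset.mem_Icc]; omega)
    rw [hook]
    rw [if_neg (by omega)]
    omega


/-- The number of `(d+1,d+2)`-core partitions with `d`-distinct parts is
`d + 1`, and they are exactly the empty partition and the one-part partitions
`(m)` for `1 ≤ m ≤ d`. -/
theorem stmt18 (d : ℕ) (hd : 0 < d) :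
    {L : List ℕ | IsPartition (partOf L) L.length ∧
      IsCore (partOf L) L.length (d + 1) ∧ IsCore (partOf L) L.length (d + 2) ∧
      DDistinct (partOf L) L.length d}.ncard = d + 1 ∧
    ∀ L : List ℕ,
      (IsPartition (partOf L) L.length ∧ IsCore (partOf L) L.length (d + 1) ∧
        IsCore (partOf L) L.length (d + 2) ∧ DDistinct (partOf L) L.length d) ↔
      (L = [] ∨ ∃ m, 1 ≤ m ∧ m ≤ d ∧ L = [m]) := by
  have key : ∀ L : List ℕ,
      (IsPartition (partOf L) L.length ∧ IsCore (partOf L) L.length (d + 1) ∧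
        IsCore (partOf L) L.length (d + 2) ∧ DDistinct (partOf L) L.length d) ↔
      (L = [] ∨ ∃ m, 1 ≤ m ∧ m ≤ d ∧ L = [m]) := by
    intro L
    constructor
    · rintro ⟨hp, hc1, hc2, hdd⟩
      match L with
      | [] => exact Or.inl rfl
      | [m] =>
        right
        have hm1 : 0 < m := by simpa [partOf] using hp.1 1 le_rfl (by simp)
        have hmd : partOf [m] 1 ≤ d := lastRow d (partOf [m]) 1 le_rfl hp hc1
        simp [partOf] at hmd
        exact ⟨m, hm1, hmd, rfl⟩
      | a :: b :: rest =>
        exact absurd hdd (fun h => noTwo d (partOf (a :: b :: rest)) rest.length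
          hp hc1 hc2 h)
    · rintro (rfl | ⟨m, hm1, hmd, rfl⟩)
      · refine ⟨⟨fun i h1 h2 => by rw [List.length_nil] at h2; omega,
            fun i h1 h2 => by rw [List.length_nil] at h2; omega⟩,
          fun i hi => by rw [Finset.mem_Icc, List.length_nil] at hi; omega,
          fun i hi => by rw [Finset.mem_Icc, List.length_nil] at hi; omega,
          fun i h1 h2 => by rw [List.length_nil] at h2; omega⟩
      · have hcore : ∀ s, d + 1 ≤ s → IsCore (partOf [m]) 1 s := by
          intro s hs i hi j hj
          simp [Finset.mem_Icc] at hi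
          subst hi
          simp [partOf, Finset.mem_Icc] at hj
          simp [hookLen, partOf, Finset.Ioc_self]
          omega
        refine ⟨⟨?_, ?_⟩, ?_, ?_, ?_⟩
        · intro i h1 h2
          simp only [List.length_singleton] at h2
          have : i = 1 := by omega
          subst this
          simp [partOf]; omega
        · intro i h1 h2
          simp only [List.length_singleton] at h2
          omega
        · exact hcore (d + 1) (by omega)
        · exact hcore (d + 2) (by omega)
        · intro i h1 h2
          simp only [List.length_singleton] at h2
          omega
  refine ⟨?_, key⟩
  have hset : {L : List ℕ | IsPartition (partOf L) L.length ∧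
      IsCore (partOf L) L.length (d + 1) ∧ IsCore (partOf L) L.length (d + 2) ∧
      DDistinct (partOf L) L.length d}
      = ↑(insert ([] : List ℕ) ((Finset.Icc 1 d).image fun m => [m])) := by
    ext L
    rw [Set.mem_setOf_eq, key L]
    simp only [Finset.coe_insert, Set.mem_insert_iff, Finset.coe_image,
      Set.mem_image, Finset.mem_coe, Finset.mem_Icc]
    constructor
    · rintro (rfl | ⟨m, h1, h2, rfl⟩)
      · exact Or.inl rfl
      · exact Or.inr ⟨m, ⟨h1, h2⟩, rfl⟩
    · rintro (rfl | ⟨m, ⟨h1, h2⟩, rfl⟩)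
      · exact Or.inl rfl
      · exact Or.inr ⟨m, h1, h2, rfl⟩
  rw [hset, Set.ncard_coe_finset,
    Finset.card_insert_of_notMem (by simp),
    Finset.card_image_of_injective _ (fun a b h => by simpa using h)]
  simp
end
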